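/- Define, for an argument a of a countable AF with enumerated arguments, the tree T^a whose root is the empty string and which contains i⌢σ exactly when a_i attacks a and σ ∈ T_{{a_i}}. Then T^a has an infinite path if and only if a does not belong to the grounded extension; moreover, if T^a is well-founded with rank at most α, then a ∈ G_{α+1}. -/

import Mathlib

def defenseFn {A : Type*} (att : A → A → Prop) (S : Set A) : Set A :=
  {x | ∀ y, att y x → ∃ z ∈ S, att z y}

/-- `G` is the transfinite iteration of the defense function from `∅`. -/
def IsIter {A : Type*} (att : A → A → Prop) (G : Ordinal → Set A) : Prop :=
  G 0 = ∅ ∧ (∀ β : Ordinal, G (β + 1) = defenseFn att (G β)) ∧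
    ∀ l : Ordinal, Order.IsSuccLimit l → G l = ⋃ β ∈ Set.Iio l, G β

/-- `Gr` is the grounded extension: the least fixed point of the defense function. -/
def IsGrounded {A : Type*} (att : A → A → Prop) (Gr : Set A) : Prop :=
  defenseFn att Gr = Gr ∧ ∀ S, defenseFn att S = S → Gr ⊆ S

/-- `π` is an infinite path through the tree `T`. -/
def IsPath (T : Set (List ℕ)) (π : ℕ → ℕ) : Prop :=
  ∀ n : ℕ, (List.ofFn fun i : Fin n => π i) ∈ T

/-- `ran_S(σ) = S ∪ {a_{σ(k)-1} : σ(k) ≥ 1}`. -/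
def ranS {A : Type} (a : ℕ → A) (S : Set A) (σ : List ℕ) : Set A :=
  S ∪ {x | ∃ k : Fin σ.length, 1 ≤ σ.get k ∧ x = a (σ.get k - 1)}

/-- The branching rule of the tree `T_S` at a node `ρ` (with `n` the first
component of the unpairing of `|ρ|`): if `a_n` attacks some element of
`ran_S(ρ)`, the children are the `i+1` with `a_i` attacking `a_n`; otherwise
the unique child is `0`. -/
def stepOK {A : Type} (att : A → A → Prop) (a : ℕ → A) (S : Set A)
    (ρ : List ℕ) (i : ℕ) : Prop :=
  ((∃ x ∈ ranS a S ρ, att (a (Nat.unpair ρ.length).1) x) ∧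
      1 ≤ i ∧ att (a (i - 1)) (a (Nat.unpair ρ.length).1)) ∨
  ((¬ ∃ x ∈ ranS a S ρ, att (a (Nat.unpair ρ.length).1) x) ∧ i = 0)

/-- The tree `T_S`: all finite sequences each of whose steps obeys `stepOK`. -/
def TS {A : Type} (att : A → A → Prop) (a : ℕ → A) (S : Set A) : Set (List ℕ) :=
  {σ | ∀ (ρ : List ℕ) (i : ℕ), ρ ++ [i] <+: σ → stepOK att a S ρ i}

/-- `RankLE T σ β` : `σ` is ranked in `T` with rank at most `β`
(every child of `σ` in `T` has rank strictly less than `β`). -/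
inductive RankLE (T : Set (List ℕ)) : List ℕ → Ordinal → Prop
  | intro (σ : List ℕ) (β : Ordinal) (g : ℕ → Ordinal)
      (hlt : ∀ n : ℕ, σ ++ [n] ∈ T → g n < β)
      (h : ∀ n : ℕ, σ ++ [n] ∈ T → RankLE T (σ ++ [n]) (g n)) : RankLE T σ β

/-- The tree `T^{arg}`: the root, together with `i :: σ` for `a_i` attacking
`arg` and `σ ∈ T_{{a_i}}`. -/
def Ttop {A : Type} (att : A → A → Prop) (a : ℕ → A) (arg : A) : Set (List ℕ) :=
  {σ | σ = [] ∨ ∃ (i : ℕ) (τ : List ℕ), σ = i :: τ ∧ att (a i) arg ∧ τ ∈ TS att a {a i}}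

/-!
An infinite path through `T^a` starts with an attacker `b` of `a` and continues with a path
through `T_{{b}}`. Since every argument `a_n` is tested, at some length `⟨n, m⟩`, against what the
path has collected so far, the set of arguments collected along the path counter-attacks each of
its attackers. The arguments attacking nothing in that set form a prefixed point of the defense
function, hence contain the grounded extension; so `b` is not attacked by it and `a` is not
defended.

Conversely, a tree without infinite path is ranked. By induction on the rank `β` of a node `σ` of
`T_S`, some element of `ran_S(σ)` is attacked by `G_{β+1}`: either `a_n` attacks `ran_S(σ)`, and
then each attacker `a_i` of `a_n` is attacked by `G_β` (look at the child `i + 1`), so that `a_n`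
itself lies in `G_{β+1}`; or the child `0` already provides the attack. At the root of `T^a` this
makes every attacker of `a` attacked by `G_α`, so `a ∈ G_{α+1}`, which lies in the grounded
extension.
-/

section Defense

variable {A : Type*}

theorem defenseFn_mono (att : A → A → Prop) : Monotone (defenseFn att) :=
  fun _ _ hST _ hx y hy =>
    let ⟨z, hz, hzy⟩ := hx y hy
    ⟨z, hST hz, hzy⟩

variable {att : A → A → Prop}

theorem IsGrounded.subset_of_defenseFn_subset {Gr S : Set A} (hGr : IsGrounded att Gr)
    (hS : defenseFn att S ⊆ S) : Gr ⊆ S :=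
  let f : Set A →o Set A := ⟨defenseFn att, defenseFn_mono att⟩
  (hGr.2 f.lfp f.map_lfp).trans (f.lfp_le hS)

theorem IsGrounded.not_attacks_of_counterattacks {Gr E : Set A} (hGr : IsGrounded att Gr)
    (hE : ∀ x ∈ E, ∀ y, att y x → ∃ z ∈ E, att z y) : ∀ w ∈ Gr, ∀ x ∈ E, ¬ att w x := by
  have hpre : defenseFn att {y | ∀ x ∈ E, ¬ att y x} ⊆ {y | ∀ x ∈ E, ¬ att y x} := by
    intro y hy x hx hyx
    obtain ⟨z, hz, hzy⟩ := hE x hx y hyx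
    obtain ⟨w, hw, hwz⟩ := hy z hzy
    exact hw z hz hwz
  exact fun w hw => hGr.subset_of_defenseFn_subset hpre hw

namespace IsIter

variable {G : Ordinal → Set A}

theorem subset_succ (hG : IsIter att G) (β : Ordinal) : G β ⊆ G (β + 1) := by
  induction β using Ordinal.limitRecOn with
  | zero => simp [hG.1]
  | add_one β ih => rw [hG.2.1 β, hG.2.1 (β + 1)]; exact defenseFn_mono att ih
  | limit β hβ ih =>
    rw [hG.2.1, hG.2.2 β hβ]
    refine Set.iUnion₂_subset fun γ hγ => ?_
    calc G γ ⊆ G (γ + 1) := ih γ hγ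
      _ = defenseFn att (G γ) := hG.2.1 γ
      _ ⊆ defenseFn att (⋃ δ ∈ Set.Iio β, G δ) :=
        defenseFn_mono att (Set.subset_biUnion_of_mem (u := G) hγ)

theorem monotone (hG : IsIter att G) : Monotone G := by
  intro β γ hβγ
  induction γ using Ordinal.limitRecOn with
  | zero => rw [nonpos_iff_eq_zero.mp hβγ]
  | add_one γ ih =>
    rcases hβγ.lt_or_eq with h | rfl
    · exact (ih (Order.lt_add_one_iff.mp h)).trans (hG.subset_succ γ)
    · exact le_rfl
  | limit γ hγ _ =>
    rcases hβγ.lt_or_eq with h | rfl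
    · rw [hG.2.2 γ hγ]; exact Set.subset_biUnion_of_mem (u := G) h
    · exact le_rfl

theorem succ_subset_of_lt (hG : IsIter att G) {β γ : Ordinal} (h : β < γ) : G (β + 1) ⊆ G γ :=
  hG.monotone (Order.add_one_le_of_lt h)

theorem subset_grounded (hG : IsIter att G) {Gr : Set A} (hGr : IsGrounded att Gr)
    (β : Ordinal) : G β ⊆ Gr := by
  induction β using Ordinal.limitRecOn with
  | zero => simp [hG.1]
  | add_one β ih => rw [hG.2.1, ← hGr.1]; exact defenseFn_mono att ih
  | limit β hβ ih => rw [hG.2.2 β hβ]; exact Set.iUnion₂_subset ih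

end IsIter

end Defense

section Rank

universe u

variable {T : Set (List ℕ)}

theorem RankLE.of_children {σ : List ℕ}
    (h : ∀ n, σ ++ [n] ∈ T → ∃ β : Ordinal.{u}, RankLE T (σ ++ [n]) β) :
    ∃ β : Ordinal.{u}, RankLE T σ β := by
  classical
  choose g hg using h
  let g' (n : ℕ) : Ordinal.{u} := if hn : σ ++ [n] ∈ T then g n hn else 0
  refine ⟨(⨆ n, g' n) + 1, .intro σ _ g' (fun n _ => ?_) (fun n hn => ?_)⟩
  · exact Order.lt_add_one_iff.mpr (Ordinal.le_iSup g' n)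
  · simpa [g', hn] using hg n hn

theorem exists_path_of_forall_exists_child (P : List ℕ → Prop) (h0 : P [])
    (h : ∀ σ, P σ → ∃ n, P (σ ++ [n])) : ∃ π : ℕ → ℕ, ∀ n, P (List.ofFn fun i : Fin n => π i) := by
  choose child hchild using h
  let node : ℕ → {σ // P σ} :=
    fun n => Nat.rec ⟨[], h0⟩ (fun _ σ => ⟨σ.1 ++ [child σ.1 σ.2], hchild σ.1 σ.2⟩) n
  refine ⟨fun n => child (node n).1 (node n).2, fun n => ?_⟩
  suffices (List.ofFn fun i : Fin n => child (node i).1 (node i).2) = (node n).1 from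
    this ▸ (node n).2
  induction n with
  | zero => rfl
  | succ n ih => rw [List.ofFn_succ_last]; simp only [Fin.val_castSucc, Fin.val_last, ih]; rfl

theorem exists_rankLE_or_path (hT : [] ∈ T) :
    (∃ β : Ordinal.{u}, RankLE T [] β) ∨ ∃ π, IsPath T π := by
  by_contra! hno
  obtain ⟨π, hπ⟩ := exists_path_of_forall_exists_child
    (fun σ => σ ∈ T ∧ ∀ β : Ordinal.{u}, ¬ RankLE T σ β) ⟨hT, hno.1⟩ fun σ hσ => by
      by_contra! hchildren
      obtain ⟨β, hβ⟩ := RankLE.of_children fun n hn => by simpa using hchildren n hn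
      exact hσ.2 β hβ
  exact hno.2 π fun n => (hπ n).1

theorem RankLE.of_cons {T' : Set (List ℕ)} {i : ℕ} (hT : ∀ τ ∈ T', i :: τ ∈ T) {τ : List ℕ}
    {β : Ordinal} (h : RankLE T (i :: τ) β) : RankLE T' τ β := by
  generalize hσ : i :: τ = σ at h
  induction h generalizing τ with
  | intro σ β g hlt _ ih =>
    subst hσ
    exact .intro τ β g (fun n hn => hlt n (hT _ hn)) fun n hn => ih n (hT _ hn) rfl

end Rank

section Trees

variable {A : Type} {att : A → A → Prop} {a : ℕ → A} {S : Set A}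

theorem mem_ranS {x : A} {σ : List ℕ} :
    x ∈ ranS a S σ ↔ x ∈ S ∨ ∃ m ∈ σ, 1 ≤ m ∧ x = a (m - 1) := by
  simp only [ranS, Set.mem_union, Set.mem_ofPred_eq, List.mem_iff_get]
  constructor
  · rintro (hx | ⟨k, hk⟩)
    · exact .inl hx
    · exact .inr ⟨_, ⟨k, rfl⟩, hk⟩
  · rintro (hx | ⟨_, ⟨k, rfl⟩, hk⟩)
    · exact .inl hx
    · exact .inr ⟨k, hk⟩

theorem ranS_nil : ranS a S [] = S := by
  ext; simp [mem_ranS]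

theorem ranS_append_zero (σ : List ℕ) : ranS a S (σ ++ [0]) = ranS a S σ := by
  ext; simp [mem_ranS]

theorem ranS_append_succ (σ : List ℕ) (i : ℕ) :
    ranS a S (σ ++ [i + 1]) = insert (a i) (ranS a S σ) := by
  ext; simp [mem_ranS, or_and_right, exists_or, or_comm, or_left_comm]

theorem nil_mem_TS : [] ∈ TS att a S := fun _ _ h => by simpa using h.length_le

theorem append_mem_TS {σ : List ℕ} {i : ℕ} (hσ : σ ∈ TS att a S) (h : stepOK att a S σ i) :
    σ ++ [i] ∈ TS att a S := by
  intro ρ j hρ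
  rcases List.prefix_concat_iff.mp hρ with heq | hρ
  · obtain ⟨rfl, rfl⟩ : ρ = σ ∧ j = i := by simpa using heq
    exact h
  · exact hσ ρ j hρ


theorem exists_attacked_of_rankLE_TS (ha : Function.Surjective a) {G : Ordinal → Set A}
    (hG : IsIter att G) {σ : List ℕ} {β : Ordinal} (hr : RankLE (TS att a S) σ β)
    (hσ : σ ∈ TS att a S) : ∃ x ∈ ranS a S σ, ∃ w ∈ G (β + 1), att w x := by
  induction hr with
  | intro σ β g hlt _ ih =>
    have hchild (i : ℕ) (hi : stepOK att a S σ i) :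
        ∃ x ∈ ranS a S (σ ++ [i]), ∃ w ∈ G β, att w x := by
      have hmem := append_mem_TS hσ hi
      obtain ⟨x, hx, w, hw, hwx⟩ := ih i hmem hmem
      exact ⟨x, hx, w, hG.succ_subset_of_lt (hlt i hmem) hw, hwx⟩
    by_contra! hnone
    have hnone' : ∀ x ∈ ranS a S σ, ∀ w ∈ G β, ¬ att w x :=
      fun x hx w hw => hnone x hx w (hG.subset_succ β hw)
    by_cases hc : ∃ x ∈ ranS a S σ, att (a (Nat.unpair σ.length).1) x
    · obtain ⟨x, hx, hcx⟩ := hc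
      refine hnone x hx _ ?_ hcx
      rw [hG.2.1]
      intro y hy
      obtain ⟨i, rfl⟩ := ha y
      obtain ⟨z, hz, w, hw, hwz⟩ :=
        hchild (i + 1) (.inl ⟨⟨x, hx, hcx⟩, by omega, by simpa using hy⟩)
      rw [ranS_append_succ] at hz
      rcases hz with rfl | hz
      · exact ⟨w, hw, hwz⟩
      · exact absurd hwz (hnone' z hz w hw)
    · obtain ⟨x, hx, w, hw, hwx⟩ := hchild 0 (.inr ⟨hc, rfl⟩)
      rw [ranS_append_zero] at hx
      exact hnone' x hx w hw hwx

theorem IsPath.stepOK_ofFn {π : ℕ → ℕ} (hπ : IsPath (TS att a S) π) (n : ℕ) :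
    stepOK att a S (List.ofFn fun i : Fin n => π i) (π n) := by
  have h := hπ (n + 1)
  rw [List.ofFn_succ_last] at h
  exact h _ _ List.prefix_rfl

def ranSPath (a : ℕ → A) (S : Set A) (π : ℕ → ℕ) : Set A :=
  S ∪ {x | ∃ k, 1 ≤ π k ∧ x = a (π k - 1)}

theorem exists_forall_mem_ranS_ofFn {π : ℕ → ℕ} {x : A} (hx : x ∈ ranSPath a S π) :
    ∃ N, ∀ n ≥ N, x ∈ ranS a S (List.ofFn fun i : Fin n => π i) := by
  rcases hx with hx | ⟨k, hk, rfl⟩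
  · exact ⟨0, fun n _ => mem_ranS.mpr (.inl hx)⟩
  · exact ⟨k + 1, fun n hn => mem_ranS.mpr
      (.inr ⟨π k, List.mem_ofFn.mpr ⟨⟨k, by omega⟩, rfl⟩, hk, rfl⟩)⟩

theorem IsPath.counterattacks (ha : Function.Surjective a) {π : ℕ → ℕ}
    (hπ : IsPath (TS att a S) π) :
    ∀ x ∈ ranSPath a S π, ∀ y, att y x → ∃ z ∈ ranSPath a S π, att z y := by
  intro x hx y hyx
  obtain ⟨n, rfl⟩ := ha y
  obtain ⟨N, hN⟩ := exists_forall_mem_ranS_ofFn hx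
  -- at length `⟨n, N⟩` the path decides whether `a n` attacks an argument collected so far
  set ℓ := Nat.pair n N
  have hlen : (Nat.unpair (List.ofFn fun i : Fin ℓ => π i).length).1 = n := by simp [ℓ]
  rcases hπ.stepOK_ofFn ℓ with ⟨-, h1, hatt⟩ | ⟨hnot, -⟩
  · exact ⟨_, .inr ⟨ℓ, h1, rfl⟩, by rwa [hlen] at hatt⟩
  · exact absurd ⟨x, hN ℓ (Nat.right_le_pair n N), by rwa [hlen]⟩ hnot

end Trees

section Ttop

variable {A : Type} {att : A → A → Prop} {a : ℕ → A} {arg : A}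

theorem IsPath.of_Ttop {π : ℕ → ℕ} (hπ : IsPath (Ttop att a arg) π) :
    att (a (π 0)) arg ∧ IsPath (TS att a {a (π 0)}) fun n => π (n + 1) := by
  have h (n : ℕ) :
      att (a (π 0)) arg ∧ (List.ofFn fun i : Fin n => π (i + 1)) ∈ TS att a {a (π 0)} := by
    obtain h | ⟨i, τ, heq, hatt, hτ⟩ := hπ (n + 1)
    · simp at h
    · simp only [List.ofFn_succ, Fin.val_zero, Fin.val_succ, List.cons.injEq] at heq
      obtain ⟨rfl, rfl⟩ := heq
      exact ⟨hatt, hτ⟩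
  exact ⟨(h 0).1, fun n => (h n).2⟩

theorem mem_G_succ_of_rankLE_Ttop (ha : Function.Surjective a) {G : Ordinal → Set A}
    (hG : IsIter att G) {α : Ordinal} (h : RankLE (Ttop att a arg) [] α) : arg ∈ G (α + 1) := by
  rw [hG.2.1]
  intro y hy
  obtain ⟨i, rfl⟩ := ha y
  obtain ⟨_, _, g, hlt, hrank⟩ := h
  have hchild : [] ++ [i] ∈ Ttop att a arg := .inr ⟨i, [], rfl, hy, nil_mem_TS⟩
  have hTS : RankLE (TS att a {a i}) [] (g i) :=
    (hrank i hchild).of_cons fun τ hτ => .inr ⟨i, τ, rfl, hy, hτ⟩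
  obtain ⟨x, hx, w, hw, hwx⟩ := exists_attacked_of_rankLE_TS ha hG hTS nil_mem_TS
  rw [ranS_nil, Set.mem_singleton_iff] at hx
  exact ⟨w, hG.succ_subset_of_lt (hlt i hchild) hw, hx ▸ hwx⟩

end Ttop

/-- `T^{arg}` has an infinite path iff `arg` is not in the grounded extension;
moreover if `T^{arg}` is well-founded with rank at most `α` then `arg ∈ G_{α+1}`. -/
theorem Ttop_path_iff_not_grounded {A : Type} (att : A → A → Prop)
    (a : ℕ → A) (ha : Function.Surjective a) (arg : A)
    (G : Ordinal → Set A) (hG : IsIter att G)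
    (Gr : Set A) (hGr : IsGrounded att Gr) :
    ((∃ π : ℕ → ℕ, IsPath (Ttop att a arg) π) ↔ arg ∉ Gr) ∧
      ∀ α : Ordinal, RankLE (Ttop att a arg) [] α → arg ∈ G (α + 1) := by
  have hrank (α : Ordinal) : RankLE (Ttop att a arg) [] α → arg ∈ G (α + 1) :=
    mem_G_succ_of_rankLE_Ttop ha hG
  refine ⟨⟨?_, fun harg => ?_⟩, hrank⟩
  · rintro ⟨π, hπ⟩ harg
    obtain ⟨hatt, htail⟩ := hπ.of_Ttop
    rw [← hGr.1] at harg
    obtain ⟨w, hw, hwatt⟩ := harg _ hatt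
    exact hGr.not_attacks_of_counterattacks (htail.counterattacks ha) w hw _ (.inl rfl) hwatt
  · rcases exists_rankLE_or_path (T := Ttop att a arg) (.inl rfl) with ⟨β, hβ⟩ | hpath
    · exact absurd (hG.subset_grounded hGr _ (hrank β hβ)) harg
    · exact hpath
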